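/- Let k be a field and n ≥ 1. Define ψ : SL(2, k)^n → Mat_{2n}(k) by sending an n-tuple of matrices ([[a_i, b_i], [c_i, d_i]])_{i=1}^n to the block matrix [[diag(a_1, …, a_n), diag(b_1, …, b_n)·J], [diag(c_n, …, c_1)·J, diag(d_n, …, d_1)]]. Then ψ(g)ᵀ Ω ψ(g) = Ω for every g ∈ SL(2, k)^n (so ψ takes values in the symplectic group Sp(2n, k) for the form Ω), and ψ is a group homomorphism: ψ(g·h) = ψ(g)·ψ(h) for all g, h ∈ SL(2, k)^n. -/

import Mathlib

/- STATEMENT 10: the embedding `ψ : SL(2,k)^n → Mat_{2n}(k)` lands in the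
   symplectic group for the form `Ω` and is a group homomorphism.
   We index `k^{2n}` by `Fin n ⊕ Fin n`. -/

namespace Stmt10

open Matrix

variable (k : Type*) [Field k] (n : ℕ)

/-- The n×n antidiagonal matrix `J` (ones on the antidiagonal). -/
def J : Matrix (Fin n) (Fin n) k :=
  fun i j => if i.val + j.val + 1 = n then 1 else 0

/-- The symplectic form matrix `Ω = [[0, −J], [J, 0]]`. -/
def Ω : Matrix (Fin n ⊕ Fin n) (Fin n ⊕ Fin n) k :=
  Matrix.fromBlocks 0 (-(J k n)) (J k n) 0

/-- `ψ` sends `([[a_i, b_i],[c_i, d_i]])_{i=1}^n` to the block matrix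
`[[diag(a_1, …, a_n), diag(b_1, …, b_n)·J], [diag(c_n, …, c_1)·J, diag(d_n, …, d_1)]]`. -/
noncomputable def ψ (g : Fin n → Matrix.SpecialLinearGroup (Fin 2) k) :
    Matrix (Fin n ⊕ Fin n) (Fin n ⊕ Fin n) k :=
  Matrix.fromBlocks
    (Matrix.diagonal fun i => (g i : Matrix (Fin 2) (Fin 2) k) 0 0)
    (Matrix.diagonal (fun i => (g i : Matrix (Fin 2) (Fin 2) k) 0 1) * J k n)
    (Matrix.diagonal (fun i => (g i.rev : Matrix (Fin 2) (Fin 2) k) 1 0) * J k n)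
    (Matrix.diagonal fun i => (g i.rev : Matrix (Fin 2) (Fin 2) k) 1 1)

/-! Pairing coordinate `inl i` with `inr i.rev` turns `ψ g` into the block diagonal matrix with
blocks `g i`, and `Ω` into the block diagonal matrix with blocks `[[0, -1], [1, 0]]`. Block
diagonal matrices multiply blockwise, so both claims reduce to `2 × 2` matrices: the homomorphism
property is then trivial, and `Aᵀ [[0, -1], [1, 0]] A = det A • [[0, -1], [1, 0]]`. -/

def pairRev : Fin n ⊕ Fin n ≃ Fin 2 × Fin n where
  toFun := Sum.elim (fun i => (0, i)) (fun i => (1, i.rev))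
  invFun p := if p.1 = 0 then .inl p.2 else .inr p.2.rev
  left_inv x := by cases x <;> simp
  right_inv := by rintro ⟨a, i⟩; fin_cases a <;> simp

lemma J_apply (i j : Fin n) : J k n i j = if i.rev = j then 1 else 0 := by
  simp only [J, Fin.ext_iff, Fin.val_rev]
  congr 1
  exact propext (by omega)

lemma ψ_eq_submatrix_blockDiagonal (g : Fin n → Matrix.SpecialLinearGroup (Fin 2) k) :
    ψ k n g = (blockDiagonal fun i => (g i : Matrix (Fin 2) (Fin 2) k)).submatrix
      (pairRev n) (pairRev n) := by
  ext (i | i) (j | j) <;>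
    simp [ψ, pairRev, J_apply, diagonal_apply, diagonal_mul, blockDiagonal_apply', Fin.rev_eq_iff]

lemma Ω_eq_submatrix_blockDiagonal :
    Ω k n = (blockDiagonal fun _ : Fin n => !![(0 : k), -1; 1, 0]).submatrix
      (pairRev n) (pairRev n) := by
  ext (i | i) (j | j) <;>
    simp [Ω, pairRev, J_apply, blockDiagonal_apply', Fin.rev_eq_iff, apply_ite]

lemma transpose_mul_sympForm_mul_fin_two {R : Type*} [CommRing R] (A : Matrix (Fin 2) (Fin 2) R) :
    Aᵀ * !![0, -1; 1, 0] * A = A.det • !![0, -1; 1, 0] := by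
  ext i j
  fin_cases i <;> fin_cases j <;>
    simp [det_fin_two, mul_apply, Fin.sum_univ_two] <;> ring

theorem psi_symplectic_and_hom :
    (∀ g : Fin n → Matrix.SpecialLinearGroup (Fin 2) k,
        (ψ k n g)ᵀ * Ω k n * ψ k n g = Ω k n) ∧
    (∀ g h : Fin n → Matrix.SpecialLinearGroup (Fin 2) k,
        ψ k n (g * h) = ψ k n g * ψ k n h) := by
  refine ⟨fun g => ?_, fun g h => ?_⟩
  · rw [ψ_eq_submatrix_blockDiagonal, Ω_eq_submatrix_blockDiagonal, transpose_submatrix,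
      submatrix_mul_equiv, submatrix_mul_equiv, blockDiagonal_transpose, ← blockDiagonal_mul,
      ← blockDiagonal_mul]
    congr 2 with i : 1
    rw [transpose_mul_sympForm_mul_fin_two, (g i).det_coe, one_smul]
  · simp only [ψ_eq_submatrix_blockDiagonal, submatrix_mul_equiv, ← blockDiagonal_mul]
    rfl

end Stmt10
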